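/- arXiv:2307.14518 — 2 statements merged into one kernel-verified Lean document; each statement's English description precedes it below -/
import Mathlib

section
/- If ρ > 1, ω > 0 and 0 < μ < (1 - 1/ρ)·(ρ² + ω²)^{1/(2(1-ρ))}, then there exists β > 0 with β^ρ - β + μ ≤ 0 and β < (ρ² + ω²)^{1/(2(1-ρ))}. -/
theorem stmt_10 (ρ ω μ : ℝ) (hρ : 1 < ρ) (hω : 0 < ω) (hμ : 0 < μ)
    (hμ' : μ < (1 - 1 / ρ) * (ρ ^ 2 + ω ^ 2) ^ (1 / (2 * (1 - ρ)))) :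
    ∃ β : ℝ, 0 < β ∧ β ^ ρ - β + μ ≤ 0 ∧
      β < (ρ ^ 2 + ω ^ 2) ^ (1 / (2 * (1 - ρ))) := by
  set B : ℝ := (ρ ^ 2 + ω ^ 2) ^ (1 / (2 * (1 - ρ))) with hBdef
  have hρ0 : (0:ℝ) < ρ := by linarith
  have hs : (0:ℝ) < ρ ^ 2 + ω ^ 2 := by positivity
  have hBpos : 0 < B := Real.rpow_pos_of_pos hs _
  have hne : (1 - ρ) ≠ 0 := by intro h; linarith
  have h1 : B ^ (ρ - 1) = (ρ ^ 2 + ω ^ 2) ^ (-(1/2) : ℝ) := by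
    rw [hBdef, ← Real.rpow_mul hs.le]
    congr 1
    field_simp
    ring
  have hsqrt : ρ < Real.sqrt (ρ ^ 2 + ω ^ 2) := by
    rw [Real.lt_sqrt hρ0.le]
    nlinarith
  have h2 : B ^ (ρ - 1) < 1 / ρ := by
    rw [h1, Real.rpow_neg hs.le, ← Real.sqrt_eq_rpow, one_div]
    exact inv_strictAnti₀ hρ0 hsqrt
  have h3 : B ^ ρ < B / ρ := by
    have hb : B ^ ρ = B ^ (ρ - 1) * B := by
      have := Real.rpow_add_one hBpos.ne' (ρ - 1)
      have h' : ρ - 1 + 1 = ρ := by ring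
      rw [h'] at this
      exact this
    rw [hb]
    calc B ^ (ρ - 1) * B < (1 / ρ) * B := mul_lt_mul_of_pos_right h2 hBpos
    _ = B / ρ := by ring
  have h4 : μ < B - B ^ ρ := by
    have : (1 - 1 / ρ) * B = B - B / ρ := by ring
    rw [this] at hμ'
    linarith
  set ε : ℝ := B - B ^ ρ - μ with hεdef
  have hε : 0 < ε := by simp only [hεdef]; linarith
  set δ : ℝ := min (ε / 2) (B / 2) with hδdef
  have hδpos : 0 < δ := lt_min (by linarith) (by linarith)
  have hδle : δ ≤ B / 2 := min_le_right _ _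
  have hδle' : δ ≤ ε / 2 := min_le_left _ _
  refine ⟨B - δ, by linarith, ?_, by linarith⟩
  have hβle : (B - δ) ^ ρ ≤ B ^ ρ :=
    Real.rpow_le_rpow (by linarith) (by linarith) hρ0.le
  have : B - B ^ ρ - μ = ε := rfl
  linarith
end

section
/- For ρ > 0, ω > 0, and each integer k ≥ 0, the value μ_k = (-1)^k · (ω/√(ρ²+ω²)) · exp((ρ/ω)·(π(-k - 1/2) - arctan(ω/ρ))) satisfies: the point x_k = exp((1/ω)·(π(-k-1/2) - arctan(ω/ρ))) is a critical point of g(x) = μ_k + x^ρ cos(ω ln x) (i.e., g'(x_k) = 0) and g(x_k) = 0. -/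
theorem stmt_12 (ρ ω : ℝ) (hρ : 0 < ρ) (hω : 0 < ω) (k : ℕ) :
    let μk : ℝ := (-1 : ℝ) ^ k * (ω / Real.sqrt (ρ ^ 2 + ω ^ 2)) *
      Real.exp ((ρ / ω) * (Real.pi * (-(k : ℝ) - 1 / 2) - Real.arctan (ω / ρ)))
    let xk : ℝ := Real.exp ((1 / ω) * (Real.pi * (-(k : ℝ) - 1 / 2) - Real.arctan (ω / ρ)))
    deriv (fun x : ℝ => μk + x ^ ρ * Real.cos (ω * Real.log x)) xk = 0 ∧
      μk + xk ^ ρ * Real.cos (ω * Real.log xk) = 0 := by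
  intro μk xk
  set a := Real.arctan (ω / ρ) with ha
  set t := (1 / ω) * (Real.pi * (-(k : ℝ) - 1 / 2) - a) with ht
  have hxpos : 0 < xk := Real.exp_pos _
  have hlog : Real.log xk = t := Real.log_exp _
  have hθ : ω * Real.log xk = -(Real.pi / 2 + a) - (k : ℝ) * Real.pi := by
    rw [hlog, ht]
    field_simp
    ring
  set s := Real.sqrt (ρ ^ 2 + ω ^ 2) with hs
  have hspos : 0 < s := Real.sqrt_pos.mpr (by positivity)
  have hsq : Real.sqrt (1 + (ω / ρ) ^ 2) = s / ρ := by
    have hss : s ^ 2 = ρ ^ 2 + ω ^ 2 := Real.sq_sqrt (by positivity)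
    have h2 : (1 + (ω / ρ) ^ 2) = (s / ρ) ^ 2 := by
      rw [div_pow, div_pow, hss]
      field_simp
    rw [h2, Real.sqrt_sq (by positivity)]
  have hcos_a : Real.cos a = ρ / s := by
    rw [ha, Real.cos_arctan, hsq]
    field_simp
  have hsin_a : Real.sin a = ω / s := by
    rw [ha, Real.sin_arctan, hsq]
    field_simp
  have hcos : Real.cos (ω * Real.log xk) = -((-1 : ℝ) ^ k * (ω / s)) := by
    rw [hθ, Real.cos_sub_nat_mul_pi, Real.cos_neg, Real.cos_add, Real.cos_pi_div_two, Real.sin_pi_div_two, hsin_a]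
    ring
  have hsin : Real.sin (ω * Real.log xk) = -((-1 : ℝ) ^ k * (ρ / s)) := by
    rw [hθ, Real.sin_sub_nat_mul_pi, Real.sin_neg, Real.sin_add, Real.cos_pi_div_two, Real.sin_pi_div_two, hcos_a]
    ring
  have hxρ : xk ^ ρ = Real.exp (ρ * t) := by
    rw [show xk = Real.exp t from rfl, ← Real.exp_mul]
    ring_nf
  have hμ : μk = (-1 : ℝ) ^ k * (ω / s) * Real.exp (ρ * t) := by
    show (-1 : ℝ) ^ k * (ω / Real.sqrt (ρ ^ 2 + ω ^ 2)) * _ = _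
    rw [← hs, ht]
    congr 2
    ring
  constructor
  · -- derivative
    have h1 : HasDerivAt (fun x : ℝ => x ^ ρ) (ρ * xk ^ (ρ - 1)) xk := by
      simpa using Real.hasDerivAt_rpow_const (Or.inl hxpos.ne')
    have h2 : HasDerivAt (fun x : ℝ => Real.cos (ω * Real.log x))
        (-Real.sin (ω * Real.log xk) * (ω * xk⁻¹)) xk := by
      exact (Real.hasDerivAt_cos _).comp xk
        ((Real.hasDerivAt_log hxpos.ne').const_mul ω)
    have h3 : HasDerivAt (fun x : ℝ => μk + x ^ ρ * Real.cos (ω * Real.log x))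
        (ρ * xk ^ (ρ - 1) * Real.cos (ω * Real.log xk) +
          xk ^ ρ * (-Real.sin (ω * Real.log xk) * (ω * xk⁻¹))) xk :=
      (HasDerivAt.const_add μk (h1.mul h2))
    rw [h3.deriv, hcos, hsin]
    have hx1 : xk ^ (ρ - 1) = xk ^ ρ * xk⁻¹ := by
      rw [Real.rpow_sub hxpos, Real.rpow_one]
      ring
    rw [hx1]
    field_simp
    ring
  · rw [hcos, hxρ, hμ]
    ring
end
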